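/- If f is holomorphic on the open unit disk 𝔻 with f'(z) ≠ 0 for all z ∈ 𝔻, and its Schwarzian derivative satisfies (1 − |z|²)² |S_f(z)| ≤ 2 for every z ∈ 𝔻, then f is injective on 𝔻. (This is Nehari's univalence criterion, the fact used in the paper that the universal Teichmüller space contains the ball of radius 2 of the space B.) -/

import Mathlib

/-!
Suppose `f a = f b` with `a ≠ b`. Precomposing with a disc automorphism preserves the hypothesis,
because the Schwarzian of a Möbius map vanishes and `(1 - |z|²)|M'(z)| = 1 - |M z|²`; so we may
take `a = 0` and `b = ρ ∈ (0, 1)`, and then `ρ` may be replaced by the first `t₁ > 0` with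
`f t₁ = f 0`. Along `[0, t₁]` the function `u = (f - f 0) (f')^(-1/2)` solves
`u'' + (S_f / 2) u = 0` and vanishes only at the endpoints. By Cauchy–Schwarz, `φ = |u|`
satisfies `φ'' ≥ -(Re S_f / 2) φ ≥ -φ / (1 - t²)²`, while `y = √(1 - t²)` solves
`y'' = -y / (1 - t²)²`. Sturm comparison then forces `y` to vanish somewhere in `[0, t₁]`,
which is absurd.
-/

/-- The Schwarzian derivative `S_f = (f''/f')' - (1/2)(f''/f')²`. -/
noncomputable def schwarzian (f : ℂ → ℂ) : ℂ → ℂ := fun z =>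
  deriv (fun w => deriv (deriv f) w / deriv f w) z -
    (deriv (deriv f) z / deriv f z) ^ 2 / 2

open Set Filter Topology Metric Complex ComplexConjugate RealInnerProductSpace

theorem sturm_comparison {φ φ' φ'' y y' y'' : ℝ → ℝ} {a b : ℝ} (hab : a < b)
    (hφc : ContinuousOn φ (Icc a b)) (hyc : ContinuousOn y (Icc a b))
    (hφa : φ a = 0) (hφb : φ b = 0) (hφpos : ∀ t ∈ Ioo a b, 0 < φ t)
    (hφ : ∀ t ∈ Ioo a b, HasDerivAt φ (φ' t) t) (hφ' : ∀ t ∈ Ioo a b, HasDerivAt φ' (φ'' t) t)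
    (hy : ∀ t ∈ Ioo a b, HasDerivAt y (y' t) t) (hy' : ∀ t ∈ Ioo a b, HasDerivAt y' (y'' t) t)
    (hcomp : ∀ t ∈ Ioo a b, φ t * y'' t ≤ φ'' t * y t) :
    ∃ t ∈ Icc a b, y t ≤ 0 := by
  by_contra! hypos
  -- `φ / y` has a positive maximum at some `m ∈ (a, b)`, where the Wronskian `W` vanishes;
  -- `W` is nondecreasing, so `φ / y` is nonincreasing on `[a, m]`, contradicting `φ a = 0`.
  set W := fun t => φ' t * y t - φ t * y' t
  have hquot : ∀ t ∈ Ioo a b, HasDerivAt (fun s => φ s / y s) (W t / y t ^ 2) t :=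
    fun t ht => (hφ t ht).div (hy t ht) (hypos t (Ioo_subset_Icc_self ht)).ne'
  have hW : ∀ t ∈ Ioo a b, HasDerivAt W (φ'' t * y t - φ t * y'' t) t := fun t ht =>
    (((hφ' t ht).mul (hy t ht)).sub ((hφ t ht).mul (hy' t ht))).congr_deriv (by ring)
  obtain ⟨m, hm, hmax⟩ := isCompact_Icc.exists_isMaxOn (nonempty_Icc.2 hab.le)
    (hφc.div hyc fun t ht => (hypos t ht).ne')
  have hmid : (a + b) / 2 ∈ Ioo a b := ⟨by linarith, by linarith⟩
  have hm_pos : 0 < φ m / y m :=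
    (div_pos (hφpos _ hmid) (hypos _ (Ioo_subset_Icc_self hmid))).trans_le
      (hmax (Ioo_subset_Icc_self hmid))
  have hma : a < m := hm.1.lt_of_ne (by rintro rfl; simp [hφa] at hm_pos)
  have hmb : m < b := hm.2.lt_of_ne (by rintro rfl; simp [hφb] at hm_pos)
  have hsub : Icc a m ⊆ Icc a b := Icc_subset_Icc_right hmb.le
  have hsub' : Ioo a m ⊆ Ioo a b := Ioo_subset_Ioo_right hmb.le
  have hWm : W m = 0 := by
    have := (hmax.isLocalMax (Icc_mem_nhds hma hmb)).hasDerivAt_eq_zero (hquot m ⟨hma, hmb⟩)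
    exact (div_eq_zero_iff.1 this).resolve_right (pow_ne_zero 2 (hypos m hm).ne')
  have hW_mono : MonotoneOn W (Ioc a m) := by
    refine monotoneOn_of_hasDerivWithinAt_nonneg (f' := fun t => φ'' t * y t - φ t * y'' t)
      (convex_Ioc a m)
      (fun t ht => (hW t ⟨ht.1, ht.2.trans_lt hmb⟩).continuousAt.continuousWithinAt)
      (fun t ht => ?_) (fun t ht => ?_) <;> rw [interior_Ioc] at ht
    · exact (hW t (hsub' ht)).hasDerivWithinAt
    · exact sub_nonneg.2 (hcomp t (hsub' ht))
  have hquot_anti : AntitoneOn (fun s => φ s / y s) (Icc a m) := by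
    refine antitoneOn_of_hasDerivWithinAt_nonpos (f' := fun t => W t / y t ^ 2) (convex_Icc a m)
      ((hφc.div hyc fun t ht => (hypos t ht).ne').mono hsub)
      (fun t ht => ?_) (fun t ht => ?_) <;> rw [interior_Icc] at ht
    · exact (hquot t (hsub' ht)).hasDerivWithinAt
    · exact div_nonpos_of_nonpos_of_nonneg
        (hWm ▸ hW_mono (Ioo_subset_Ioc_self ht) (right_mem_Ioc.2 hma) ht.2.le) (sq_nonneg _)
  have := hquot_anti (left_mem_Icc.2 hma.le) (right_mem_Icc.2 hma.le) hma.le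
  simp only [hφa, zero_div] at this
  linarith

theorem exists_first_eq_of_eventually_ne {α : Type*} [TopologicalSpace α] [T1Space α]
    {f : ℝ → α} {a b : ℝ} (hab : a < b) (hf : ContinuousOn f (Icc a b)) (hfb : f b = f a)
    (hne : ∀ᶠ s in 𝓝[>] a, f s ≠ f a) :
    ∃ t ∈ Ioc a b, f t = f a ∧ ∀ s ∈ Ioo a t, f s ≠ f a := by
  obtain ⟨u, hau, hu⟩ := mem_nhdsGT_iff_exists_Ioo_subset.1 hne
  set Z := Icc (min u b) b ∩ f ⁻¹' {f a}
  have hZ : IsCompact Z := isCompact_Icc.of_isClosed_subset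
    ((hf.mono (Icc_subset_Icc_left (le_min hau.le hab.le))).preimage_isClosed_of_isClosed
      isClosed_Icc isClosed_singleton) inter_subset_left
  obtain ⟨t, ⟨htZ, hft⟩, hleast⟩ := hZ.exists_isLeast ⟨b, ⟨min_le_right u b, le_rfl⟩, hfb⟩
  have hat : a < t := (lt_min hau hab).trans_le htZ.1
  refine ⟨t, ⟨hat, htZ.2⟩, hft, fun s hs hfs => ?_⟩
  by_cases hsu : s < min u b
  · exact hu ⟨hs.1, hsu.trans_le (min_le_left u b)⟩ hfs
  · exact (hleast ⟨⟨not_lt.1 hsu, hs.2.le.trans htZ.2⟩, hfs⟩).not_gt hs.2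

section NormCurve

variable {F : Type*} [NormedAddCommGroup F] [InnerProductSpace ℝ F]

theorem HasDerivAt.norm_of_ne_zero {u : ℝ → F} {u' : F} {t : ℝ} (hu : HasDerivAt u u' t)
    (h0 : u t ≠ 0) : HasDerivAt (fun s => ‖u s‖) (⟪u t, u'⟫ / ‖u t‖) t := by
  have h := hu.norm_sq.sqrt (pow_ne_zero 2 (norm_ne_zero_iff.2 h0))
  simp only [Real.sqrt_sq (norm_nonneg _)] at h
  exact h.congr_deriv (mul_div_mul_left _ _ two_ne_zero)

theorem HasDerivAt.inner_div_norm {u u' : ℝ → F} {u'' : F} {t : ℝ}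
    (hu : HasDerivAt u (u' t) t) (hu' : HasDerivAt u' u'' t) (h0 : u t ≠ 0) :
    HasDerivAt (fun s => ⟪u s, u' s⟫ / ‖u s‖)
      (((⟪u t, u''⟫ + ‖u' t‖ ^ 2) * ‖u t‖ - ⟪u t, u' t⟫ * (⟪u t, u' t⟫ / ‖u t‖)) / ‖u t‖ ^ 2)
      t := by
  have hinner := hu.inner ℝ hu'
  rw [real_inner_self_eq_norm_sq] at hinner
  exact hinner.div (hu.norm_of_ne_zero h0) (norm_ne_zero_iff.2 h0)

theorem sturm_comparison_norm {u u' u'' : ℝ → F} {p y y' : ℝ → ℝ} {a b : ℝ} (hab : a < b)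
    (huc : ContinuousOn u (Icc a b)) (hyc : ContinuousOn y (Icc a b))
    (hua : u a = 0) (hub : u b = 0) (hu0 : ∀ t ∈ Ioo a b, u t ≠ 0)
    (hu : ∀ t ∈ Ioo a b, HasDerivAt u (u' t) t) (hu' : ∀ t ∈ Ioo a b, HasDerivAt u' (u'' t) t)
    (hy : ∀ t ∈ Ioo a b, HasDerivAt y (y' t) t)
    (hy' : ∀ t ∈ Ioo a b, HasDerivAt y' (-(p t * y t)) t)
    (hp : ∀ t ∈ Ioo a b, -(p t * ‖u t‖ ^ 2) ≤ ⟪u t, u'' t⟫) :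
    ∃ t ∈ Icc a b, y t ≤ 0 := by
  by_contra! hypos
  -- Cauchy–Schwarz gives `‖u‖'' ≥ ⟪u, u''⟫ / ‖u‖ ≥ -p ‖u‖`.
  have hcomp : ∀ t ∈ Ioo a b, ‖u t‖ * -(p t * y t) ≤ ((⟪u t, u'' t⟫ + ‖u' t‖ ^ 2) * ‖u t‖
      - ⟪u t, u' t⟫ * (⟪u t, u' t⟫ / ‖u t‖)) / ‖u t‖ ^ 2 * y t := by
    intro t ht
    have hn : 0 < ‖u t‖ := norm_pos_iff.2 (hu0 t ht)
    have hCS : ⟪u t, u' t⟫ * (⟪u t, u' t⟫ / ‖u t‖) ≤ ‖u' t‖ ^ 2 * ‖u t‖ := by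
      rw [← mul_div_assoc, div_le_iff₀ hn, ← sq]
      nlinarith [abs_real_inner_le_norm (u t) (u' t), sq_abs ⟪u t, u' t⟫,
        abs_nonneg ⟪u t, u' t⟫]
    have hφ'' : -(p t * ‖u t‖) ≤ ((⟪u t, u'' t⟫ + ‖u' t‖ ^ 2) * ‖u t‖
        - ⟪u t, u' t⟫ * (⟪u t, u' t⟫ / ‖u t‖)) / ‖u t‖ ^ 2 := by
      rw [le_div_iff₀ (by positivity)]
      nlinarith [hp t ht]
    nlinarith [hypos t (Ioo_subset_Icc_self ht)]
  obtain ⟨t, ht, hyt⟩ := sturm_comparison hab huc.norm hyc (by simp [hua]) (by simp [hub])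
    (fun t ht => norm_pos_iff.2 (hu0 t ht)) (fun t ht => (hu t ht).norm_of_ne_zero (hu0 t ht))
    (fun t ht => (hu t ht).inner_div_norm (hu' t ht) (hu0 t ht)) hy hy' hcomp
  exact (hypos t ht).not_ge hyt

end NormCurve

theorem hasDerivAt_sqrt_one_sub_sq {t : ℝ} (ht : t ∈ Ioo (-1) 1) :
    HasDerivAt (fun s => √(1 - s ^ 2)) (-t / √(1 - t ^ 2)) t := by
  have h := ((hasDerivAt_pow 2 t).const_sub 1).sqrt (by nlinarith [ht.1, ht.2])
  exact h.congr_deriv (by field_simp; ring)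

theorem hasDerivAt_neg_div_sqrt_one_sub_sq {t : ℝ} (ht : t ∈ Ioo (-1) 1) :
    HasDerivAt (fun s => -s / √(1 - s ^ 2)) (-(((1 - t ^ 2) ^ 2)⁻¹ * √(1 - t ^ 2))) t := by
  have hpos : 0 < 1 - t ^ 2 := by nlinarith [ht.1, ht.2]
  have hsq : √(1 - t ^ 2) ^ 2 = 1 - t ^ 2 := Real.sq_sqrt hpos.le
  have h := (hasDerivAt_neg t).div (hasDerivAt_sqrt_one_sub_sq ht) (Real.sqrt_pos.2 hpos).ne'
  refine h.congr_deriv ?_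
  field_simp
  nlinarith [hsq]

noncomputable def preSchwarzian (f : ℂ → ℂ) (z : ℂ) : ℂ := deriv (deriv f) z / deriv f z

theorem schwarzian_eq (f : ℂ → ℂ) (z : ℂ) :
    schwarzian f z = deriv (preSchwarzian f) z - preSchwarzian f z ^ 2 / 2 := rfl

section Holomorphic

variable {g L : ℂ → ℂ} {U : Set ℂ} {z : ℂ}

theorem differentiableOn_preSchwarzian (hU : IsOpen U) (hg : DifferentiableOn ℂ g U)
    (hg' : ∀ z ∈ U, deriv g z ≠ 0) : DifferentiableOn ℂ (preSchwarzian g) U :=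
  (hg.deriv hU).deriv hU |>.div (hg.deriv hU) hg'

theorem hasDerivAt_preSchwarzian (hU : IsOpen U) (hg : DifferentiableOn ℂ g U)
    (hg' : ∀ z ∈ U, deriv g z ≠ 0) (hz : z ∈ U) :
    HasDerivAt (preSchwarzian g) (schwarzian g z + preSchwarzian g z ^ 2 / 2) z := by
  rw [schwarzian_eq, sub_add_cancel]
  exact ((differentiableOn_preSchwarzian hU hg hg').differentiableAt (hU.mem_nhds hz)).hasDerivAt

/-- If `L' = g''/g'`, then `exp (-L/2)` is a branch of `(g')^(-1/2)`, and this is the classical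
solution `(g - c) (g')^(-1/2)` of `u'' + (S_g/2) u = 0`. -/
noncomputable def schwarzianSolution (g L : ℂ → ℂ) (c z : ℂ) : ℂ := (g z - c) * exp (-L z / 2)

noncomputable def schwarzianSolutionDeriv (g L : ℂ → ℂ) (c z : ℂ) : ℂ :=
  (deriv g z - (g z - c) * preSchwarzian g z / 2) * exp (-L z / 2)

theorem hasDerivAt_exp_neg_half {l : ℂ} (hL : HasDerivAt L l z) :
    HasDerivAt (fun w => exp (-L w / 2)) (-(l / 2) * exp (-L z / 2)) z :=
  (hL.neg.div_const 2).cexp.congr_deriv (by simp only [Pi.neg_apply]; ring)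

theorem hasDerivAt_schwarzianSolution (hU : IsOpen U) (hg : DifferentiableOn ℂ g U)
    (hL : ∀ z ∈ U, HasDerivAt L (preSchwarzian g z) z) (c : ℂ) (hz : z ∈ U) :
    HasDerivAt (schwarzianSolution g L c) (schwarzianSolutionDeriv g L c z) z := by
  have hgz := (hg.differentiableAt (hU.mem_nhds hz)).hasDerivAt
  refine ((hgz.sub_const c).mul (hasDerivAt_exp_neg_half (hL z hz))).congr_deriv ?_
  simp only [schwarzianSolutionDeriv]
  ring

theorem hasDerivAt_schwarzianSolutionDeriv (hU : IsOpen U) (hg : DifferentiableOn ℂ g U)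
    (hg' : ∀ z ∈ U, deriv g z ≠ 0) (hL : ∀ z ∈ U, HasDerivAt L (preSchwarzian g z) z)
    (c : ℂ) (hz : z ∈ U) :
    HasDerivAt (schwarzianSolutionDeriv g L c)
      (-(schwarzian g z / 2) * schwarzianSolution g L c z) z := by
  have hg₁ := (hg.differentiableAt (hU.mem_nhds hz)).hasDerivAt
  have hg₂ := ((hg.deriv hU).differentiableAt (hU.mem_nhds hz)).hasDerivAt
  have hP := hasDerivAt_preSchwarzian hU hg hg' hz
  refine ((hg₂.sub (((hg₁.sub_const c).mul hP).div_const 2)).mul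
    (hasDerivAt_exp_neg_half (hL z hz))).congr_deriv ?_
  have hg'' : deriv (deriv g) z = preSchwarzian g z * deriv g z :=
    (div_mul_cancel₀ _ (hg' z hz)).symm
  simp only [schwarzianSolution, hg'', Pi.sub_apply, Pi.mul_apply]
  ring

theorem preSchwarzian_comp {f M : ℂ → ℂ} {V : Set ℂ} (hU : IsOpen U) (hV : IsOpen V)
    (hf : DifferentiableOn ℂ f V) (hf' : ∀ w ∈ V, deriv f w ≠ 0)
    (hM : DifferentiableOn ℂ M U) (hM' : ∀ z ∈ U, deriv M z ≠ 0) (hMUV : MapsTo M U V)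
    (hz : z ∈ U) :
    preSchwarzian (f ∘ M) z = preSchwarzian f (M z) * deriv M z + preSchwarzian M z := by
  have hMz := (hM.differentiableAt (hU.mem_nhds hz)).hasDerivAt
  have hderiv : deriv (f ∘ M) =ᶠ[𝓝 z] fun w => deriv f (M w) * deriv M w :=
    eventually_of_mem (hU.mem_nhds hz) fun w hw =>
      deriv_comp w (hf.differentiableAt (hV.mem_nhds (hMUV hw)))
        (hM.differentiableAt (hU.mem_nhds hw))
  have hf₂ := ((hf.deriv hV).differentiableAt (hV.mem_nhds (hMUV hz))).hasDerivAt
  have hM₂ := ((hM.deriv hU).differentiableAt (hU.mem_nhds hz)).hasDerivAt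
  have hcomp₂ : HasDerivAt (fun w => deriv f (M w) * deriv M w)
      (deriv (deriv f) (M z) * deriv M z * deriv M z + deriv f (M z) * deriv (deriv M) z) z :=
    (hf₂.comp z hMz).mul hM₂
  rw [preSchwarzian, hderiv.deriv_eq, hcomp₂.deriv, hderiv.eq_of_nhds]
  have := hf' _ (hMUV hz)
  have := hM' z hz
  simp only [preSchwarzian]
  field_simp

theorem schwarzian_comp {f M : ℂ → ℂ} {V : Set ℂ} (hU : IsOpen U) (hV : IsOpen V)
    (hf : DifferentiableOn ℂ f V) (hf' : ∀ w ∈ V, deriv f w ≠ 0)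
    (hM : DifferentiableOn ℂ M U) (hM' : ∀ z ∈ U, deriv M z ≠ 0) (hMUV : MapsTo M U V)
    (hz : z ∈ U) :
    schwarzian (f ∘ M) z = schwarzian f (M z) * deriv M z ^ 2 + schwarzian M z := by
  have hMz := (hM.differentiableAt (hU.mem_nhds hz)).hasDerivAt
  have hM₂ := ((hM.deriv hU).differentiableAt (hU.mem_nhds hz)).hasDerivAt
  have hpre : preSchwarzian (f ∘ M) =ᶠ[𝓝 z]
      fun w => preSchwarzian f (M w) * deriv M w + preSchwarzian M w :=
    eventually_of_mem (hU.mem_nhds hz) fun w hw =>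
      preSchwarzian_comp hU hV hf hf' hM hM' hMUV hw
  have hPf := hasDerivAt_preSchwarzian hV hf hf' (hMUV hz)
  have hPM := hasDerivAt_preSchwarzian hU hM hM' hz
  have hM'' : deriv (deriv M) z = preSchwarzian M z * deriv M z :=
    (div_mul_cancel₀ _ (hM' z hz)).symm
  have hcomp : HasDerivAt (fun w => preSchwarzian f (M w) * deriv M w + preSchwarzian M w)
      ((schwarzian f (M z) + preSchwarzian f (M z) ^ 2 / 2) * deriv M z * deriv M z
        + preSchwarzian f (M z) * deriv (deriv M) z
        + (schwarzian M z + preSchwarzian M z ^ 2 / 2)) z :=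
    ((hPf.comp z hMz).mul hM₂).add hPM
  rw [schwarzian_eq, hpre.deriv_eq, hcomp.deriv, hpre.eq_of_nhds, hM'']
  ring

end Holomorphic

section Mobius

variable {p q r s z : ℂ}

theorem hasDerivAt_mobius (hz : r * z + s ≠ 0) :
    HasDerivAt (fun w => (p * w + q) / (r * w + s)) ((p * s - q * r) / (r * z + s) ^ 2) z := by
  have h := (((hasDerivAt_id z).const_mul p).add_const q).div
    (((hasDerivAt_id z).const_mul r).add_const s) hz
  refine h.congr_deriv ?_
  simp only [id, mul_one]
  ring

theorem hasDerivAt_const_div_linear_pow (c : ℂ) (n : ℕ) (hz : r * z + s ≠ 0) :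
    HasDerivAt (fun w => c / (r * w + s) ^ (n + 1))
      (-((n + 1) * r * c) / (r * z + s) ^ (n + 2)) z := by
  have h := (hasDerivAt_const z c).div
    ((((hasDerivAt_id z).const_mul r).add_const s).pow (n + 1)) (pow_ne_zero _ hz)
  refine h.congr_deriv ?_
  simp only [id, mul_one, Pi.pow_apply, Nat.cast_add, Nat.cast_one, add_tsub_cancel_right]
  field_simp
  ring

theorem schwarzian_mobius (hdet : p * s - q * r ≠ 0) (hz : r * z + s ≠ 0) :
    schwarzian (fun w => (p * w + q) / (r * w + s)) z = 0 := by
  have hU : {w | r * w + s ≠ 0} ∈ 𝓝 z :=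
    (isOpen_ne_fun (by fun_prop) continuous_const).mem_nhds hz
  have hderiv : deriv (fun w => (p * w + q) / (r * w + s)) =ᶠ[𝓝 z]
      fun w => (p * s - q * r) / (r * w + s) ^ 2 :=
    eventually_of_mem hU fun w hw => (hasDerivAt_mobius hw).deriv
  have hpre : preSchwarzian (fun w => (p * w + q) / (r * w + s)) =ᶠ[𝓝 z]
      fun w => -2 * r / (r * w + s) ^ (0 + 1) := by
    filter_upwards [hU, hderiv.eventuallyEq_nhds] with w hw hderivw
    rw [preSchwarzian, hderivw.deriv_eq, hderivw.eq_of_nhds,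
      (hasDerivAt_const_div_linear_pow _ 1 hw).deriv, div_div_div_eq,
      div_eq_div_iff (mul_ne_zero (pow_ne_zero _ hw) hdet) (pow_ne_zero _ hw)]
    push_cast
    ring
  rw [schwarzian_eq, hpre.deriv_eq, (hasDerivAt_const_div_linear_pow _ 0 hz).deriv,
    hpre.eq_of_nhds]
  field_simp
  ring

end Mobius

noncomputable def diskAut (a β z : ℂ) : ℂ := (β * z + a) / (conj a * β * z + 1)

section DiskAut

variable {a β z : ℂ}

theorem sq_norm_sub_sq_norm_diskAut (hβ : ‖β‖ = 1) (a z : ℂ) :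
    ‖conj a * β * z + 1‖ ^ 2 - ‖β * z + a‖ ^ 2 = (1 - ‖a‖ ^ 2) * (1 - ‖z‖ ^ 2) := by
  have hββ : β * conj β = 1 := by
    rw [Complex.mul_conj, Complex.normSq_eq_norm_sq, hβ]; norm_num
  apply Complex.ofReal_injective
  push_cast
  simp only [← Complex.mul_conj', map_add, map_mul, map_one, Complex.conj_conj]
  linear_combination z * conj z * (a * conj a - 1) * hββ

theorem diskAut_denom_ne_zero (ha : ‖a‖ < 1) (hβ : ‖β‖ = 1) (hz : z ∈ ball (0:ℂ) 1) :
    conj a * β * z + 1 ≠ 0 := by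
  rw [mem_ball_zero_iff] at hz
  intro h
  have h1 : ‖conj a * β * z‖ = 1 := by rw [eq_neg_of_add_eq_zero_left h, norm_neg, norm_one]
  rw [norm_mul, norm_mul, Complex.norm_conj, hβ, mul_one] at h1
  nlinarith [norm_nonneg a, norm_nonneg z]

theorem mapsTo_diskAut (ha : ‖a‖ < 1) (hβ : ‖β‖ = 1) :
    MapsTo (diskAut a β) (ball 0 1) (ball 0 1) := by
  intro z hz
  have hD := diskAut_denom_ne_zero ha hβ hz
  have hkey := sq_norm_sub_sq_norm_diskAut hβ a z
  rw [mem_ball_zero_iff] at hz ⊢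
  rw [diskAut, norm_div, div_lt_one (norm_pos_iff.2 hD)]
  have : 0 < (1 - ‖a‖ ^ 2) * (1 - ‖z‖ ^ 2) := by
    apply mul_pos <;> nlinarith [norm_nonneg a, norm_nonneg z]
  nlinarith [norm_nonneg (β * z + a), norm_nonneg (conj a * β * z + 1)]

theorem mobius_det_diskAut (a β : ℂ) : β * 1 - a * (conj a * β) = β * (1 - ‖a‖ ^ 2) := by
  rw [← Complex.ofReal_pow, ← Complex.normSq_eq_norm_sq, ← Complex.mul_conj]
  ring

theorem hasDerivAt_diskAut (ha : ‖a‖ < 1) (hβ : ‖β‖ = 1) (hz : z ∈ ball (0:ℂ) 1) :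
    HasDerivAt (diskAut a β) (β * (1 - ‖a‖ ^ 2) / (conj a * β * z + 1) ^ 2) z := by
  refine (hasDerivAt_mobius (diskAut_denom_ne_zero ha hβ hz)).congr_deriv ?_
  rw [mobius_det_diskAut]

theorem one_sub_sq_norm_mul_norm_deriv_diskAut (ha : ‖a‖ < 1) (hβ : ‖β‖ = 1)
    (hz : z ∈ ball (0:ℂ) 1) :
    (1 - ‖z‖ ^ 2) * ‖deriv (diskAut a β) z‖ = 1 - ‖diskAut a β z‖ ^ 2 := by
  have hkey := sq_norm_sub_sq_norm_diskAut hβ a z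
  have hD := norm_pos_iff.2 (diskAut_denom_ne_zero ha hβ hz)
  have h1a : ‖(1 : ℂ) - ‖a‖ ^ 2‖ = 1 - ‖a‖ ^ 2 := by
    rw [← Complex.ofReal_one, ← Complex.ofReal_pow, ← Complex.ofReal_sub, Complex.norm_real,
      Real.norm_of_nonneg (by nlinarith [norm_nonneg a])]
  rw [(hasDerivAt_diskAut ha hβ hz).deriv, diskAut, norm_div, norm_div, norm_mul, norm_pow, hβ,
    h1a, div_pow, one_mul, mul_div_assoc', eq_sub_iff_add_eq, ← add_div,
    div_eq_one_iff_eq (by positivity)]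
  linarith

theorem one_sub_sq_norm_ne_zero (ha : ‖a‖ < 1) : (1 : ℂ) - ‖a‖ ^ 2 ≠ 0 := by
  rw [← Complex.ofReal_one, ← Complex.ofReal_pow, ← Complex.ofReal_sub]
  exact Complex.ofReal_ne_zero.2 (by nlinarith [norm_nonneg a])

theorem deriv_diskAut_ne_zero (ha : ‖a‖ < 1) (hβ : ‖β‖ = 1) (hz : z ∈ ball (0:ℂ) 1) :
    deriv (diskAut a β) z ≠ 0 := by
  rw [(hasDerivAt_diskAut ha hβ hz).deriv]
  exact div_ne_zero
    (mul_ne_zero (norm_ne_zero_iff.1 (by simp [hβ])) (one_sub_sq_norm_ne_zero ha))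
    (pow_ne_zero 2 (diskAut_denom_ne_zero ha hβ hz))

theorem schwarzian_diskAut (ha : ‖a‖ < 1) (hβ : ‖β‖ = 1) (hz : z ∈ ball (0:ℂ) 1) :
    schwarzian (diskAut a β) z = 0 := by
  refine schwarzian_mobius ?_ (diskAut_denom_ne_zero ha hβ hz)
  rw [mobius_det_diskAut]
  exact mul_ne_zero (norm_ne_zero_iff.1 (by simp [hβ])) (one_sub_sq_norm_ne_zero ha)

theorem exists_diskAut_eq {b : ℂ} (ha : a ∈ ball (0:ℂ) 1) (hb : b ∈ ball (0:ℂ) 1) (hab : a ≠ b) :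
    ∃ β : ℂ, ‖β‖ = 1 ∧ ∃ ρ ∈ Ioo (0:ℝ) 1, diskAut a β 0 = a ∧ diskAut a β ρ = b := by
  have ha' := mem_ball_zero_iff.1 ha
  have hb' := mem_ball_zero_iff.1 hb
  have hD : 1 - conj a * b ≠ 0 := by
    simpa [sub_eq_add_neg, add_comm] using
      diskAut_denom_ne_zero (a := -a) (by simpa using ha') norm_one hb
  have hkey : ‖1 - conj a * b‖ ^ 2 - ‖b - a‖ ^ 2 = (1 - ‖a‖ ^ 2) * (1 - ‖b‖ ^ 2) := by
    simpa [sub_eq_add_neg, add_comm] using sq_norm_sub_sq_norm_diskAut norm_one (-a) b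
  set w := (b - a) / (1 - conj a * b)
  have hwD : w * (1 - conj a * b) = b - a := div_mul_cancel₀ _ hD
  have hw0 : w ≠ 0 := div_ne_zero (sub_ne_zero.2 hab.symm) hD
  have hw1 : ‖w‖ < 1 := by
    rw [norm_div, div_lt_one (norm_pos_iff.2 hD)]
    have : 0 < (1 - ‖a‖ ^ 2) * (1 - ‖b‖ ^ 2) := by
      apply mul_pos <;> nlinarith [norm_nonneg a, norm_nonneg b]
    nlinarith [norm_nonneg (b - a), norm_nonneg (1 - conj a * b)]
  have hρ : (‖w‖ : ℂ) ≠ 0 := Complex.ofReal_ne_zero.2 (norm_ne_zero_iff.2 hw0)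
  refine ⟨w / ‖w‖, by simp [hw0], ‖w‖, ⟨norm_pos_iff.2 hw0, hw1⟩, by simp [diskAut], ?_⟩
  have hconj : conj a * w + 1 ≠ 0 := by
    simpa using diskAut_denom_ne_zero ha' norm_one (mem_ball_zero_iff.2 hw1)
  rw [diskAut, mul_assoc, div_mul_cancel₀ w hρ, div_eq_iff hconj]
  linear_combination hwD

end DiskAut

theorem Complex.real_inner_mul_self (z w : ℂ) : ⟪w, z * w⟫ = z.re * ‖w‖ ^ 2 := by
  rw [Complex.inner, mul_assoc, Complex.mul_conj, Complex.re_mul_ofReal,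
    Complex.normSq_eq_norm_sq]

structure NehariCondition (f : ℂ → ℂ) : Prop where
  differentiableOn : DifferentiableOn ℂ f (ball 0 1)
  deriv_ne_zero : ∀ z ∈ ball (0:ℂ) 1, deriv f z ≠ 0
  schwarzian_le : ∀ z ∈ ball (0:ℂ) 1, (1 - ‖z‖ ^ 2) ^ 2 * ‖schwarzian f z‖ ≤ 2

namespace NehariCondition

variable {f : ℂ → ℂ} {a β : ℂ}

theorem comp_diskAut (hf : NehariCondition f) (ha : ‖a‖ < 1) (hβ : ‖β‖ = 1) :
    NehariCondition (f ∘ diskAut a β) := by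
  have hM : DifferentiableOn ℂ (diskAut a β) (ball 0 1) := fun z hz =>
    (hasDerivAt_diskAut ha hβ hz).differentiableAt.differentiableWithinAt
  have hmaps := mapsTo_diskAut ha hβ
  refine ⟨hf.differentiableOn.comp hM hmaps, fun z hz => ?_, fun z hz => ?_⟩
  · rw [deriv_comp z (hf.differentiableOn.differentiableAt (isOpen_ball.mem_nhds (hmaps hz)))
      (hM.differentiableAt (isOpen_ball.mem_nhds hz))]
    exact mul_ne_zero (hf.deriv_ne_zero _ (hmaps hz)) (deriv_diskAut_ne_zero ha hβ hz)
  · rw [schwarzian_comp isOpen_ball isOpen_ball hf.differentiableOn hf.deriv_ne_zero hM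
      (fun w hw => deriv_diskAut_ne_zero ha hβ hw) hmaps hz, schwarzian_diskAut ha hβ hz,
      add_zero, norm_mul, norm_pow]
    calc (1 - ‖z‖ ^ 2) ^ 2 * (‖schwarzian f (diskAut a β z)‖ * ‖deriv (diskAut a β) z‖ ^ 2)
        = ((1 - ‖z‖ ^ 2) * ‖deriv (diskAut a β) z‖) ^ 2 * ‖schwarzian f (diskAut a β z)‖ := by
          ring
      _ ≤ 2 := by
          rw [one_sub_sq_norm_mul_norm_deriv_diskAut ha hβ hz]
          exact hf.schwarzian_le _ (hmaps hz)

theorem neg_inv_sq_mul_sq_norm_le_inner (hf : NehariCondition f) {t : ℝ} (ht : t ∈ Ioo (-1) 1)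
    (w : ℂ) : -(((1 - t ^ 2) ^ 2)⁻¹ * ‖w‖ ^ 2) ≤ ⟪w, -(schwarzian f t / 2) * w⟫ := by
  have hpos : 0 < 1 - t ^ 2 := by nlinarith [ht.1, ht.2]
  have hS := hf.schwarzian_le t (by simpa [abs_lt] using ht)
  rw [Complex.norm_real, Real.norm_eq_abs, sq_abs] at hS
  have hbound : ‖schwarzian f t‖ / 2 ≤ ((1 - t ^ 2) ^ 2)⁻¹ := by
    rw [← one_div, le_div_iff₀ (by positivity)]
    linarith
  rw [Complex.real_inner_mul_self, neg_re, div_ofNat_re]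
  nlinarith [Complex.re_le_norm (schwarzian f t), sq_nonneg ‖w‖]

theorem exists_ode_solution_ofReal (hf : NehariCondition f) (c : ℂ) :
    ∃ u u' : ℝ → ℂ, (∀ t ∈ Ioo (-1:ℝ) 1, HasDerivAt u (u' t) t) ∧
      (∀ t ∈ Ioo (-1:ℝ) 1, HasDerivAt u' (-(schwarzian f t / 2) * u t) t) ∧
      ∀ t : ℝ, u t = 0 ↔ f t = c := by
  obtain ⟨L, hL⟩ := (differentiableOn_preSchwarzian isOpen_ball hf.differentiableOn
    hf.deriv_ne_zero).isExactOn_ball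
  have hball : ∀ {t : ℝ}, t ∈ Ioo (-1) 1 → (t : ℂ) ∈ ball (0:ℂ) 1 := fun ht => by
    simpa [abs_lt] using ht
  refine ⟨fun t => schwarzianSolution f L c t, fun t => schwarzianSolutionDeriv f L c t,
    fun t ht => ?_, fun t ht => ?_, fun t => ?_⟩
  · exact (hasDerivAt_schwarzianSolution isOpen_ball hf.differentiableOn hL c
      (hball ht)).comp_ofReal
  · exact (hasDerivAt_schwarzianSolutionDeriv isOpen_ball hf.differentiableOn hf.deriv_ne_zero
      hL c (hball ht)).comp_ofReal
  · simp [schwarzianSolution, exp_ne_zero, sub_eq_zero]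

theorem ne_of_lt_ofReal (hf : NehariCondition f) {a b : ℝ} (ha : a ∈ Ioo (-1) 1)
    (hb : b ∈ Ioo (-1) 1) (hab : a < b) : f b ≠ f a := by
  intro hfab
  have hball : ∀ {t : ℝ}, t ∈ Ioo (-1) 1 → (t : ℂ) ∈ ball (0:ℂ) 1 := fun ht => by
    simpa [abs_lt] using ht
  have hsub : Icc a b ⊆ Ioo (-1) 1 := Icc_subset_Ioo ha.1 hb.2
  have hfd : ∀ t ∈ Ioo (-1:ℝ) 1, HasDerivAt (fun s : ℝ => f s) (deriv f t) t := fun t ht =>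
    ((hf.differentiableOn.differentiableAt (isOpen_ball.mem_nhds (hball ht))).hasDerivAt
      ).comp_ofReal
  have hfa : ∀ᶠ t : ℝ in 𝓝[>] a, f t ≠ f a :=
    ((hfd a ha).eventually_ne (hf.deriv_ne_zero _ (hball ha))).filter_mono (nhdsGT_le_nhdsNE a)
  obtain ⟨t₁, ht₁, hft₁, hne⟩ := exists_first_eq_of_eventually_ne hab
    (fun t ht => (hfd t (hsub ht)).continuousAt.continuousWithinAt) hfab hfa
  have hsub₁ : Icc a t₁ ⊆ Ioo (-1) 1 := (Icc_subset_Icc_right ht₁.2).trans hsub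
  have hsub₁' : Ioo a t₁ ⊆ Ioo (-1) 1 := Ioo_subset_Icc_self.trans hsub₁
  obtain ⟨u, u', hu, hu', hu0⟩ := hf.exists_ode_solution_ofReal (f a)
  obtain ⟨t, ht, hyt⟩ := sturm_comparison_norm (p := fun t => ((1 - t ^ 2) ^ 2)⁻¹)
    (y := fun s => √(1 - s ^ 2)) ht₁.1
    (fun t ht => (hu t (hsub₁ ht)).continuousAt.continuousWithinAt) (by fun_prop)
    ((hu0 a).2 rfl) ((hu0 t₁).2 hft₁) (fun t ht h => hne t ht ((hu0 t).1 h))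
    (fun t ht => hu t (hsub₁' ht)) (fun t ht => hu' t (hsub₁' ht))
    (fun t ht => hasDerivAt_sqrt_one_sub_sq (hsub₁' ht))
    (fun t ht => hasDerivAt_neg_div_sqrt_one_sub_sq (hsub₁' ht))
    (fun t ht => hf.neg_inv_sq_mul_sq_norm_le_inner (hsub₁' ht) (u t))
  have ht' := hsub₁ ht
  exact (Real.sqrt_pos.2 (by nlinarith [ht'.1, ht'.2])).not_ge hyt

theorem injOn_ofReal (hf : NehariCondition f) : InjOn (fun t : ℝ => f t) (Ioo (-1) 1) := by
  intro a ha b hb hab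
  by_contra hne
  rcases lt_or_gt_of_ne hne with h | h
  · exact hf.ne_of_lt_ofReal ha hb h hab.symm
  · exact hf.ne_of_lt_ofReal hb ha h hab

end NehariCondition

/-- Nehari's univalence criterion: if `f` is holomorphic with nonvanishing derivative
on `𝔻` and `(1-|z|²)² |S_f(z)| ≤ 2` there, then `f` is injective on `𝔻`. -/
theorem nehari_univalence (f : ℂ → ℂ)
    (hf : DifferentiableOn ℂ f (Metric.ball (0:ℂ) 1))
    (hf' : ∀ z ∈ Metric.ball (0:ℂ) 1, deriv f z ≠ 0)
    (hS : ∀ z ∈ Metric.ball (0:ℂ) 1,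
      (1 - ‖z‖ ^ 2) ^ 2 * ‖schwarzian f z‖ ≤ 2) :
    Set.InjOn f (Metric.ball (0:ℂ) 1) := by
  intro a ha b hb hfab
  by_contra hab
  obtain ⟨β, hβ, ρ, hρ, hM0, hMρ⟩ := exists_diskAut_eq ha hb hab
  have hρ₀ : ρ = 0 := (NehariCondition.comp_diskAut ⟨hf, hf', hS⟩ (mem_ball_zero_iff.1 ha)
    hβ).injOn_ofReal ⟨by linarith [hρ.1], hρ.2⟩ ⟨by norm_num, by norm_num⟩
    (by simp [hM0, hMρ, hfab])
  exact hρ.1.ne' hρ₀
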